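/- Let G be a graph with n ≥ 10c vertices containing a 2×c lattice: distinct vertices u₁,…,u_c, w₁,…,w_c, u₁',…,u_c', w₁',…,w_c' such that E contains the edges {u_i', u_i}, {u_i, w_i}, {w_i, w_i'} for all 1 ≤ i ≤ c and the edges {u_i, u_{i+1}}, {w_i, w_{i+1}} for all 1 ≤ i < c, and the vertices u_i and w_i have no further edges. If there is an optimum bisection vector y (cw(y) = bw(G)) such that y_{u_i} = y_{u_i'} = +1 and y_{w_i} = y_{w_i'} = −1 for all i, then h(G) < bw(G). -/

import Mathlib

open Matrix BigOperators Finset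

noncomputable section

/-- Adjacency matrix of a graph on `Fin n`, with real entries. -/
def adjA {n : ℕ} (G : SimpleGraph (Fin n)) [DecidableRel G.Adj] :
    Matrix (Fin n) (Fin n) ℝ :=
  Matrix.of fun i j => if G.Adj i j then (1 : ℝ) else 0

/-- A bisection vector: entries in `{+1, -1}` summing to zero. -/
def IsBisection {n : ℕ} (x : Fin n → ℝ) : Prop :=
  (∀ i, x i = 1 ∨ x i = -1) ∧ ∑ i, x i = 0

/-- Cut width of a `±1` vector: `∑_{{i,j}∈E} (1 - x_i x_j)/2`, written as a sum
over ordered pairs (each edge counted twice, hence the `/4`). -/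
def cw {n : ℕ} (G : SimpleGraph (Fin n)) [DecidableRel G.Adj] (x : Fin n → ℝ) : ℝ :=
  (∑ i, ∑ j, adjA G i j * (1 - x i * x j)) / 4

/-- Bisection width: minimum cut width over all bisection vectors. -/
def bw {n : ℕ} (G : SimpleGraph (Fin n)) [DecidableRel G.Adj] : ℝ :=
  sInf {c | ∃ x : Fin n → ℝ, IsBisection x ∧ cw G x = c}

/-- `λ_S(B)`: supremum of the Rayleigh quotient of `B` over nonzero vectors of
coordinate sum zero. -/
def lamS {n : ℕ} (B : Matrix (Fin n) (Fin n) ℝ) : ℝ :=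
  sSup {r | ∃ x : Fin n → ℝ, x ≠ 0 ∧ ∑ i, x i = 0 ∧
    r = (x ⬝ᵥ B.mulVec x) / (∑ i, (x i) ^ 2)}

/-- Sum of all entries of a matrix. -/
def msum {n : ℕ} (M : Matrix (Fin n) (Fin n) ℝ) : ℝ := ∑ i, ∑ j, M i j

/-- Boppana's function `g(G,d)`. -/
def gB {n : ℕ} (G : SimpleGraph (Fin n)) [DecidableRel G.Adj] (d : Fin n → ℝ) : ℝ :=
  (msum (adjA G + Matrix.diagonal d) - n * lamS (adjA G + Matrix.diagonal d)) / 4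

/-- Boppana's lower bound `h(G) = sup_d g(G,d)`. -/
def hB {n : ℕ} (G : SimpleGraph (Fin n)) [DecidableRel G.Adj] : ℝ :=
  sSup {r | ∃ d : Fin n → ℝ, r = gB G d}

/-!
For every `d`, `n λ_S(A + diag d) ≥ aᵀ(A + diag d)a + bᵀ(A + diag d)b` whenever `a, b ∈ S` and
every row `(a_i, b_i)` is a unit vector; the diagonal then contributes exactly `∑ d`, so
`4 h(G) ≤ sum(A) − aᵀAa − bᵀAb`, while `4 cw(y) = sum(A) − yᵀAy`. It therefore suffices to find
such `a, b` with `aᵀAa + bᵀAb > yᵀAy`.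

Take `(a_i, b_i) = (α_i y_i, β_i)` with `(α, β) = (4/5, 3/5)` on the inner lattice
`L = {u_i, w_i}` and `(√(1 - T²), -T)` elsewhere, where `T = 3|L| / (5(n - |L|))` makes `∑ b = 0`
(and `∑ a = 0` because `L` is balanced). Edges outside `L` gain `T²(1 - y_i y_j) ≥ 0`, uncut edges
inside `L` gain nothing, each cut edge `u_i w_i` gains `2 · 18/25`, and only the pendant edges
`u_i u_i'`, `w_i w_i'` lose. Once `T ≤ 3/20`, i.e. `n ≥ 10c`, the two pendant edges at `u_i` and
`w_i` lose less than `u_i w_i` gains.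
-/

section Boppana

variable {n : ℕ}

lemma dotProduct_mulVec_self_eq_sum (B : Matrix (Fin n) (Fin n) ℝ) (x : Fin n → ℝ) :
    x ⬝ᵥ B *ᵥ x = ∑ i, ∑ j, B i j * (x i * x j) := by
  simp only [dotProduct, mulVec, Finset.mul_sum]
  exact sum_congr rfl fun i _ => sum_congr rfl fun j _ => by ring

lemma dotProduct_mulVec_self_le_sum_abs_mul (B : Matrix (Fin n) (Fin n) ℝ) (x : Fin n → ℝ) :
    x ⬝ᵥ B *ᵥ x ≤ (∑ i, ∑ j, |B i j|) * ∑ i, x i ^ 2 := by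
  rw [dotProduct_mulVec_self_eq_sum, sum_mul]
  refine sum_le_sum fun i _ => ?_
  rw [sum_mul]
  refine sum_le_sum fun j _ => ?_
  have hi := single_le_sum (fun k _ => sq_nonneg (x k)) (mem_univ i)
  have hj := single_le_sum (fun k _ => sq_nonneg (x k)) (mem_univ j)
  have hij : |x i * x j| ≤ ∑ k, x k ^ 2 := by
    rw [abs_mul]
    nlinarith [sq_nonneg (|x i| - |x j|), sq_abs (x i), sq_abs (x j)]
  calc B i j * (x i * x j) ≤ |B i j| * |x i * x j| := by rw [← abs_mul]; exact le_abs_self _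
    _ ≤ |B i j| * ∑ k, x k ^ 2 := mul_le_mul_of_nonneg_left hij (abs_nonneg _)

lemma dotProduct_mulVec_self_le_lamS_mul (B : Matrix (Fin n) (Fin n) ℝ) {x : Fin n → ℝ}
    (hx : ∑ i, x i = 0) : x ⬝ᵥ B *ᵥ x ≤ lamS B * ∑ i, x i ^ 2 := by
  rcases eq_or_ne x 0 with rfl | hx0
  · simp
  obtain ⟨i, hi⟩ := Function.ne_iff.mp hx0
  have hpos : 0 < ∑ i, x i ^ 2 :=
    sum_pos' (fun j _ => sq_nonneg (x j)) ⟨i, mem_univ i, pow_two_pos_of_ne_zero hi⟩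
  rw [← div_le_iff₀ hpos]
  refine le_csSup ⟨∑ i, ∑ j, |B i j|, ?_⟩ ⟨x, hx0, hx, rfl⟩
  rintro r ⟨z, -, -, rfl⟩
  exact div_le_of_le_mul₀ (sum_nonneg fun j _ => sq_nonneg (z j))
    (sum_nonneg fun i _ => sum_nonneg fun j _ => abs_nonneg _) (dotProduct_mulVec_self_le_sum_abs_mul B z)

lemma msum_add_diagonal (A : Matrix (Fin n) (Fin n) ℝ) (d : Fin n → ℝ) :
    msum (A + diagonal d) = msum A + ∑ i, d i := by
  simp [msum, sum_add_distrib, diagonal_apply]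

lemma dotProduct_add_diagonal_mulVec (A : Matrix (Fin n) (Fin n) ℝ) (d x : Fin n → ℝ) :
    x ⬝ᵥ (A + diagonal d) *ᵥ x = x ⬝ᵥ A *ᵥ x + ∑ i, d i * x i ^ 2 := by
  rw [add_mulVec, dotProduct_add]
  congr 1
  exact sum_congr rfl fun i _ => by rw [mulVec_diagonal]; ring

lemma msum_sub_mul_lamS_le (A : Matrix (Fin n) (Fin n) ℝ) (d : Fin n → ℝ) {a b : Fin n → ℝ}
    (ha : ∑ i, a i = 0) (hb : ∑ i, b i = 0) (hab : ∀ i, a i ^ 2 + b i ^ 2 = 1) :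
    msum (A + diagonal d) - n * lamS (A + diagonal d) ≤
      msum A - (a ⬝ᵥ A *ᵥ a + b ⬝ᵥ A *ᵥ b) := by
  have hnorm : ∑ i, a i ^ 2 + ∑ i, b i ^ 2 = n := by simp [← sum_add_distrib, hab]
  have hdiag : ∑ i, d i * a i ^ 2 + ∑ i, d i * b i ^ 2 = ∑ i, d i := by
    simp [← sum_add_distrib, ← mul_add, hab]
  have hla := dotProduct_mulVec_self_le_lamS_mul (A + diagonal d) ha
  have hlb := dotProduct_mulVec_self_le_lamS_mul (A + diagonal d) hb
  rw [dotProduct_add_diagonal_mulVec] at hla hlb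
  rw [msum_add_diagonal, ← hnorm]
  linarith

lemma four_mul_cw (G : SimpleGraph (Fin n)) [DecidableRel G.Adj] (x : Fin n → ℝ) :
    4 * cw G x = msum (adjA G) - x ⬝ᵥ adjA G *ᵥ x := by
  rw [cw, mul_div_cancel₀ _ four_ne_zero, dotProduct_mulVec_self_eq_sum, msum,
    ← sum_sub_distrib]
  exact sum_congr rfl fun i _ => by rw [← sum_sub_distrib]; exact sum_congr rfl fun j _ => by ring

def edgeGain (G : SimpleGraph (Fin n)) [DecidableRel G.Adj] (a b y : Fin n → ℝ) (i j : Fin n) : ℝ :=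
  adjA G i j * (a i * a j + b i * b j - y i * y j)

lemma hB_le_cw_sub (G : SimpleGraph (Fin n)) [DecidableRel G.Adj] {a b : Fin n → ℝ}
    (ha : ∑ i, a i = 0) (hb : ∑ i, b i = 0) (hab : ∀ i, a i ^ 2 + b i ^ 2 = 1) (y : Fin n → ℝ) :
    hB G ≤ cw G y - (∑ i, ∑ j, edgeGain G a b y i j) / 4 := by
  have hgain : ∑ i, ∑ j, edgeGain G a b y i j =
      a ⬝ᵥ adjA G *ᵥ a + b ⬝ᵥ adjA G *ᵥ b - y ⬝ᵥ adjA G *ᵥ y := by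
    simp only [dotProduct_mulVec_self_eq_sum, ← sum_add_distrib, ← sum_sub_distrib, edgeGain]
    exact sum_congr rfl fun i _ => sum_congr rfl fun j _ => by ring
  have hhB : hB G ≤ (msum (adjA G) - (a ⬝ᵥ adjA G *ᵥ a + b ⬝ᵥ adjA G *ᵥ b)) / 4 := by
    refine csSup_le ⟨_, 0, rfl⟩ ?_
    rintro r ⟨d, rfl⟩
    exact div_le_div_of_nonneg_right (msum_sub_mul_lamS_le _ d ha hb hab) four_pos.le
  linarith [four_mul_cw G y]

end Boppana

lemma sum_inner_add_two_mul_boundary_le {ι : Type*} [Fintype ι] [DecidableEq ι]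
    (K : ι → ι → ℝ) (hK : ∀ i j, K i j = K j i) (L : Finset ι)
    (hKout : ∀ i ∉ L, ∀ j ∉ L, 0 ≤ K i j) :
    ∑ i ∈ L, (∑ j ∈ L, K i j + 2 * ∑ j ∈ Lᶜ, K i j) ≤ ∑ i, ∑ j, K i j := by
  have hcross : ∑ i ∈ Lᶜ, ∑ j ∈ L, K i j = ∑ i ∈ L, ∑ j ∈ Lᶜ, K i j := by
    rw [sum_comm]
    exact sum_congr rfl fun i _ => sum_congr rfl fun j _ => hK j i
  have hout : 0 ≤ ∑ i ∈ Lᶜ, ∑ j ∈ Lᶜ, K i j :=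
    sum_nonneg fun i hi => sum_nonneg fun j hj => hKout i (mem_compl.1 hi) j (mem_compl.1 hj)
  have hrow : ∀ i, ∑ j, K i j = ∑ j ∈ L, K i j + ∑ j ∈ Lᶜ, K i j :=
    fun i => (sum_add_sum_compl L (K i)).symm
  rw [← sum_add_sum_compl L]
  simp only [hrow, sum_add_distrib, ← mul_sum]
  linarith

section Tilt

variable {ι : Type*} [DecidableEq ι]

lemma sum_ite_mem_univ [Fintype ι] (L : Finset ι) (f g : ι → ℝ) :
    ∑ i, (if i ∈ L then f i else g i) = ∑ i ∈ L, f i + ∑ i ∈ Lᶜ, g i := by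
  rw [sum_ite, filter_mem_eq_inter, univ_inter, filter_not, filter_mem_eq_inter, univ_inter,
    ← compl_eq_univ_sdiff]

def tiltCos (L : Finset ι) (T : ℝ) (i : ι) : ℝ := if i ∈ L then 4 / 5 else √(1 - T ^ 2)

def tiltSin (L : Finset ι) (T : ℝ) (i : ι) : ℝ := if i ∈ L then 3 / 5 else -T

lemma tiltCos_sq_add_tiltSin_sq (L : Finset ι) {T : ℝ} (hT : T ^ 2 ≤ 1) (i : ι) :
    tiltCos L T i ^ 2 + tiltSin L T i ^ 2 = 1 := by
  unfold tiltCos tiltSin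
  split_ifs
  · norm_num
  · rw [Real.sq_sqrt (by linarith)]
    ring

lemma sum_tiltCos_mul_eq_zero [Fintype ι] (L : Finset ι) (T : ℝ) {y : ι → ℝ} (hy : ∑ i, y i = 0)
    (hyL : ∑ i ∈ L, y i = 0) : ∑ i, tiltCos L T i * y i = 0 := by
  have hyLc : ∑ i ∈ Lᶜ, y i = 0 := by linarith [sum_add_sum_compl L y]
  simp only [tiltCos, ite_mul]
  rw [sum_ite_mem_univ, ← mul_sum, ← mul_sum, hyL, hyLc]
  ring

lemma sum_tiltSin_eq_zero [Fintype ι] (L : Finset ι) {T : ℝ}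
    (hT : T * (Fintype.card ι - #L) = 3 / 5 * #L) : ∑ i, tiltSin L T i = 0 := by
  simp only [tiltSin]
  rw [sum_ite_mem_univ, sum_const, sum_const, card_compl, nsmul_eq_mul,
    nsmul_eq_mul, Nat.cast_sub (card_le_univ L)]
  linarith

end Tilt

section Graph

variable {n : ℕ} (G : SimpleGraph (Fin n)) [DecidableRel G.Adj]

lemma adjA_nonneg (i j : Fin n) : 0 ≤ adjA G i j := by
  simp only [adjA, of_apply]
  split_ifs <;> norm_num

lemma adjA_of_adj {i j : Fin n} (h : G.Adj i j) : adjA G i j = 1 := by simp [adjA, h]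

lemma adjA_of_not_adj {i j : Fin n} (h : ¬G.Adj i j) : adjA G i j = 0 := by simp [adjA, h]

lemma adjA_comm (i j : Fin n) : adjA G i j = adjA G j i := by simp [adjA, G.adj_comm]

def tiltGain (y : Fin n → ℝ) (L : Finset (Fin n)) (T : ℝ) : Fin n → Fin n → ℝ :=
  edgeGain G (fun i => tiltCos L T i * y i) (tiltSin L T) y

variable {y : Fin n → ℝ} (L : Finset (Fin n)) (T : ℝ)

lemma tiltGain_eq (i j : Fin n) :
    tiltGain G y L T i j = adjA G i j *
      ((tiltCos L T i * tiltCos L T j - 1) * (y i * y j) + tiltSin L T i * tiltSin L T j) := by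
  rw [tiltGain, edgeGain]
  ring

lemma tiltGain_comm (i j : Fin n) : tiltGain G y L T i j = tiltGain G y L T j i := by
  rw [tiltGain_eq, tiltGain_eq, adjA_comm]
  ring

lemma tiltGain_of_mem_of_mem {i j : Fin n} (hi : i ∈ L) (hj : j ∈ L) :
    tiltGain G y L T i j = adjA G i j * (9 / 25 * (1 - y i * y j)) := by
  rw [tiltGain_eq, tiltCos, tiltCos, tiltSin, tiltSin, if_pos hi, if_pos hj, if_pos hi, if_pos hj]
  ring

lemma tiltGain_nonneg_of_notMem (hy : ∀ i, y i = 1 ∨ y i = -1) {T : ℝ} (hT : T ^ 2 ≤ 1)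
    {i j : Fin n} (hi : i ∉ L) (hj : j ∉ L) : 0 ≤ tiltGain G y L T i j := by
  have hyy : y i * y j ≤ 1 := by
    rcases hy i with h | h <;> rcases hy j with h' | h' <;> norm_num [h, h']
  rw [tiltGain_eq, tiltCos, tiltCos, tiltSin, tiltSin, if_neg hi, if_neg hj, if_neg hi, if_neg hj,
    ← sq, Real.sq_sqrt (by linarith)]
  exact mul_nonneg (adjA_nonneg G i j) (by nlinarith)

lemma tiltGain_of_mem_of_notMem (hy : ∀ i, y i = 1 ∨ y i = -1) {T : ℝ} {i j : Fin n}
    (hi : i ∈ L) (hj : j ∉ L) (hadj : G.Adj i j) (hyj : y j = y i) :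
    tiltGain G y L T i j = 4 / 5 * √(1 - T ^ 2) - 1 - 3 / 5 * T := by
  have hyi : y i * y i = 1 := by rcases hy i with h | h <;> norm_num [h]
  rw [tiltGain_eq, tiltCos, tiltCos, tiltSin, tiltSin, if_pos hi, if_neg hj, if_pos hi, if_neg hj,
    adjA_of_adj G hadj, hyj, hyi]
  ring

lemma le_sum_tiltGain_inner (hy : ∀ i, y i = 1 ∨ y i = -1) {i : Fin n} (hi : i ∈ L)
    (hcut : ∃ j ∈ L, G.Adj i j ∧ y j ≠ y i) : 18 / 25 ≤ ∑ j ∈ L, tiltGain G y L T i j := by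
  obtain ⟨j, hj, hadj, hne⟩ := hcut
  have hyy : y i * y j = -1 := by
    rcases hy i with h | h <;> rcases hy j with h' | h' <;> simp_all
  have hnn : ∀ k ∈ L, 0 ≤ tiltGain G y L T i k := fun k hk => by
    have hyy : y i * y k ≤ 1 := by
      rcases hy i with h | h <;> rcases hy k with h' | h' <;> norm_num [h, h']
    rw [tiltGain_of_mem_of_mem G L T hi hk]
    exact mul_nonneg (adjA_nonneg G i k) (by linarith)
  calc (18 / 25 : ℝ) = tiltGain G y L T i j := by
        rw [tiltGain_of_mem_of_mem G L T hi hj, hyy, adjA_of_adj G hadj]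
        norm_num
    _ ≤ ∑ j ∈ L, tiltGain G y L T i j := single_le_sum hnn hj

lemma le_sum_tiltGain_boundary (hy : ∀ i, y i = 1 ∨ y i = -1) {T : ℝ} (hT0 : 0 ≤ T)
    {i : Fin n} (hi : i ∈ L) (hout : ∃ i', y i' = y i ∧ ∀ j ∉ L, G.Adj i j → j = i') :
    4 / 5 * √(1 - T ^ 2) - 1 - 3 / 5 * T ≤ ∑ j ∈ Lᶜ, tiltGain G y L T i j := by
  obtain ⟨i', hyi', hi'⟩ := hout
  set κ := 4 / 5 * √(1 - T ^ 2) - 1 - 3 / 5 * T with hκ_def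
  have hκ : κ ≤ 0 := by
    have : √(1 - T ^ 2) ≤ 1 := Real.sqrt_le_one.mpr (by nlinarith)
    rw [hκ_def]
    linarith
  have hterm : ∀ j ∈ Lᶜ, (if j = i' then κ else 0) ≤ tiltGain G y L T i j := by
    intro j hj
    by_cases hadj : G.Adj i j
    · obtain rfl := hi' j (mem_compl.1 hj) hadj
      rw [if_pos rfl, tiltGain_of_mem_of_notMem G L hy hi (mem_compl.1 hj) hadj hyi']
    · rw [tiltGain, edgeGain, adjA_of_not_adj G hadj, zero_mul]
      split_ifs <;> linarith
  calc κ ≤ if i' ∈ Lᶜ then κ else 0 := by split_ifs <;> linarith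
    _ = ∑ j ∈ Lᶜ, if j = i' then κ else 0 := (sum_ite_eq' Lᶜ i' fun _ => κ).symm
    _ ≤ ∑ j ∈ Lᶜ, tiltGain G y L T i j := sum_le_sum hterm

end Graph

section Balanced

variable {n : ℕ} (G : SimpleGraph (Fin n)) [DecidableRel G.Adj] {y : Fin n → ℝ} (L : Finset (Fin n))

theorem le_sum_sum_tiltGain (hy : ∀ i, y i = 1 ∨ y i = -1) {T : ℝ} (hT0 : 0 ≤ T)
    (hT : T ≤ 3 / 20) (hcut : ∀ i ∈ L, ∃ j ∈ L, G.Adj i j ∧ y j ≠ y i)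
    (hout : ∀ i ∈ L, ∃ i', y i' = y i ∧ ∀ j ∉ L, G.Adj i j → j = i') :
    13 * #L / 125 ≤ ∑ i, ∑ j, tiltGain G y L T i j := by
  have hT1 : T ^ 2 ≤ 1 := by nlinarith
  have hrow : 13 / 125 ≤ 18 / 25 + 2 * (4 / 5 * √(1 - T ^ 2) - 1 - 3 / 5 * T) := by
    have : 1 - T ^ 2 ≤ √(1 - T ^ 2) :=
      (Real.le_sqrt (by nlinarith) (by nlinarith)).2 (by nlinarith)
    nlinarith
  refine le_trans ?_ (sum_inner_add_two_mul_boundary_le _ (tiltGain_comm G L T) L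
    fun i hi j hj => tiltGain_nonneg_of_notMem G L hy hT1 hi hj)
  calc 13 * (#L : ℝ) / 125 = ∑ i ∈ L, (13 / 125 : ℝ) := by
        rw [sum_const, nsmul_eq_mul]
        ring
    _ ≤ _ := sum_le_sum fun i hi => by
        linarith [le_sum_tiltGain_inner G L T hy hi (hcut i hi),
          le_sum_tiltGain_boundary G L hy hT0 hi (hout i hi)]

theorem hB_le_cw_sub_of_balanced (hy : IsBisection y) (hL : 5 * #L ≤ n)
    (hyL : ∑ i ∈ L, y i = 0) (hcut : ∀ i ∈ L, ∃ j ∈ L, G.Adj i j ∧ y j ≠ y i)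
    (hout : ∀ i ∈ L, ∃ i', y i' = y i ∧ ∀ j ∉ L, G.Adj i j → j = i') :
    hB G ≤ cw G y - 13 * #L / 500 := by
  obtain ⟨hpm, hsum⟩ := hy
  have hLR : 5 * (#L : ℝ) ≤ n := by exact_mod_cast hL
  set T : ℝ := 3 * #L / (5 * (n - #L))
  obtain ⟨hTn, hT0, hT⟩ : T * (n - #L) = 3 / 5 * #L ∧ 0 ≤ T ∧ T ≤ 3 / 20 := by
    rcases (#L).eq_zero_or_pos with h | h
    · norm_num [T, h]
    have hL0 : (0 : ℝ) < #L := by exact_mod_cast h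
    have hnL : (0 : ℝ) < n - #L := by linarith
    refine ⟨by simp only [T]; field_simp, by positivity, ?_⟩
    rw [div_le_iff₀ (by positivity)]
    linarith
  have hab : ∀ i, (tiltCos L T i * y i) ^ 2 + tiltSin L T i ^ 2 = 1 := fun i => by
    have hyi : y i ^ 2 = 1 := by rcases hpm i with h | h <;> norm_num [h]
    rw [mul_pow, hyi, mul_one, tiltCos_sq_add_tiltSin_sq L (by nlinarith)]
  have hbopp := hB_le_cw_sub G (sum_tiltCos_mul_eq_zero L T hsum hyL)
    (sum_tiltSin_eq_zero L (by simpa using hTn)) hab y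
  have hgain := le_sum_sum_tiltGain G L hpm hT0 hT hcut hout
  rw [tiltGain] at hgain
  linarith

end Balanced

lemma sum_union_image_eq_zero {ι : Type*} [DecidableEq ι] {c : ℕ} {u w : Fin c → ι}
    (hu : Function.Injective u) (hw : Function.Injective w) {y : ι → ℝ}
    (hyu : ∀ k, y (u k) = 1) (hyw : ∀ k, y (w k) = -1) :
    ∑ i ∈ univ.image u ∪ univ.image w, y i = 0 := by
  have hdisj : Disjoint (univ.image u) (univ.image w) := by
    simp only [disjoint_left, mem_image, mem_univ, true_and, not_exists]
    rintro _ ⟨k, rfl⟩ l hl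
    linarith [hyu k, hyw l, congrArg y hl]
  rw [sum_union hdisj, sum_image hu.injOn, sum_image hw.injOn]
  simp [hyu, hyw]

lemma eq_of_adj_of_notMem {n c : ℕ} {G : SimpleGraph (Fin n)} {L : Finset (Fin n)}
    {P : Fin c → Fin c → Prop} {u w u' : Fin c → Fin n}
    (hu : ∀ i z, G.Adj (u i) z ↔ z = u' i ∨ z = w i ∨ ∃ j, P i j ∧ z = u j)
    (huL : ∀ k, u k ∈ L) (hwL : ∀ k, w k ∈ L) (k : Fin c) {z : Fin n} (hz : z ∉ L)
    (hadj : G.Adj (u k) z) : z = u' k := by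
  rcases (hu k z).1 hadj with h | rfl | ⟨l, -, rfl⟩
  exacts [h, absurd (hwL k) hz, absurd (huL l) hz]

theorem lattice_on_cut_forces_fail_general {n c : ℕ}
    (hc : 1 ≤ c) (hn10c : 10 * c ≤ n)
    (G : SimpleGraph (Fin n)) [DecidableRel G.Adj]
    (u w u' w' : Fin c → Fin n)
    (hinj : Function.Injective (fun p : Fin 4 × Fin c => ![u, w, u', w'] p.1 p.2))
    (e2 : ∀ i, G.Adj (u i) (w i))
    (hu : ∀ i z, G.Adj (u i) z ↔ z = u' i ∨ z = w i ∨
        ∃ j : Fin c, ((j : ℕ) = (i : ℕ) + 1 ∨ (i : ℕ) = (j : ℕ) + 1) ∧ z = u j)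
    (hwn : ∀ i z, G.Adj (w i) z ↔ z = w' i ∨ z = u i ∨
        ∃ j : Fin c, ((j : ℕ) = (i : ℕ) + 1 ∨ (i : ℕ) = (j : ℕ) + 1) ∧ z = w j)
    (y : Fin n → ℝ) (hy : IsBisection y) (hopt : cw G y = bw G)
    (hyu : ∀ i, y (u i) = 1) (hyu' : ∀ i, y (u' i) = 1)
    (hyw : ∀ i, y (w i) = -1) (hyw' : ∀ i, y (w' i) = -1) :
    hB G < bw G := by
  set L := univ.image u ∪ univ.image w
  have mem_u : ∀ k, u k ∈ L := fun k => mem_union_left _ (mem_image_of_mem u (mem_univ k))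
  have mem_w : ∀ k, w k ∈ L := fun k => mem_union_right _ (mem_image_of_mem w (mem_univ k))
  have cases_L : ∀ i ∈ L, (∃ k, u k = i) ∨ ∃ k, w k = i := by simp [L]
  have hcard : #L ≤ c + c := by
    simpa using (card_union_le _ _).trans (add_le_add (card_image_le (s := univ) (f := u))
      (card_image_le (s := univ) (f := w)))
  have hbal : ∑ i ∈ L, y i = 0 := sum_union_image_eq_zero
    (fun k l h => congrArg Prod.snd (@hinj (0, k) (0, l) h))
    (fun k l h => congrArg Prod.snd (@hinj (1, k) (1, l) h)) hyu hyw
  have hcut : ∀ i ∈ L, ∃ j ∈ L, G.Adj i j ∧ y j ≠ y i := by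
    intro i hi
    obtain ⟨k, rfl⟩ | ⟨k, rfl⟩ := cases_L i hi
    · exact ⟨w k, mem_w k, e2 k, by norm_num [hyu, hyw]⟩
    · exact ⟨u k, mem_u k, (e2 k).symm, by norm_num [hyu, hyw]⟩
  have hout : ∀ i ∈ L, ∃ i', y i' = y i ∧ ∀ j ∉ L, G.Adj i j → j = i' := by
    intro i hi
    obtain ⟨k, rfl⟩ | ⟨k, rfl⟩ := cases_L i hi
    · exact ⟨u' k, by rw [hyu', hyu], fun j => eq_of_adj_of_notMem hu mem_u mem_w k⟩
    · exact ⟨w' k, by rw [hyw', hyw], fun j => eq_of_adj_of_notMem hwn mem_w mem_u k⟩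
  have hLpos : (0 : ℝ) < #L := by exact_mod_cast card_pos.2 ⟨_, mem_u ⟨0, hc⟩⟩
  have hbound := hB_le_cw_sub_of_balanced G L hy (by omega) hbal hcut hout
  rw [← hopt]
  linarith

/-- a `2×c` lattice lying on an optimum bisection (with the inner
lattice vertices `u_i`, `w_i` having no further edges) forces `h(G) < bw(G)`. -/
theorem lattice_on_cut_forces_fail {n c : ℕ} (hn2 : 2 ≤ n) (hne : Even n)
    (hc : 1 ≤ c) (hn10c : 10 * c ≤ n)
    (G : SimpleGraph (Fin n)) [DecidableRel G.Adj]
    (u w u' w' : Fin c → Fin n)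
    (hinj : Function.Injective (fun p : Fin 4 × Fin c => ![u, w, u', w'] p.1 p.2))
    (e1 : ∀ i, G.Adj (u' i) (u i))
    (e2 : ∀ i, G.Adj (u i) (w i))
    (e3 : ∀ i, G.Adj (w i) (w' i))
    (e4 : ∀ i j : Fin c, (j : ℕ) = (i : ℕ) + 1 → G.Adj (u i) (u j))
    (e5 : ∀ i j : Fin c, (j : ℕ) = (i : ℕ) + 1 → G.Adj (w i) (w j))
    (hu : ∀ i z, G.Adj (u i) z ↔ z = u' i ∨ z = w i ∨
        ∃ j : Fin c, ((j : ℕ) = (i : ℕ) + 1 ∨ (i : ℕ) = (j : ℕ) + 1) ∧ z = u j)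
    (hwn : ∀ i z, G.Adj (w i) z ↔ z = w' i ∨ z = u i ∨
        ∃ j : Fin c, ((j : ℕ) = (i : ℕ) + 1 ∨ (i : ℕ) = (j : ℕ) + 1) ∧ z = w j)
    (y : Fin n → ℝ) (hy : IsBisection y) (hopt : cw G y = bw G)
    (hyu : ∀ i, y (u i) = 1) (hyu' : ∀ i, y (u' i) = 1)
    (hyw : ∀ i, y (w i) = -1) (hyw' : ∀ i, y (w' i) = -1) :
    hB G < bw G :=
  lattice_on_cut_forces_fail_general hc hn10c G u w u' w' hinj e2 hu hwn y hy hopt hyu hyu' hyw hyw'
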